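/- arXiv:1611.01812 — 4 statements merged into one kernel-verified Lean document; each statement's English description precedes it below -/
import Mathlib

section
/- Let X be a metric space and Y = X ∪ {e} the pointed metric space with ρ^Y(p,q) = min(ρ^X(p,q), 2) for p,q ∈ X and ρ^Y(p,e) = 1 for p ∈ X. Then ρ^Y is a metric on Y, and the map sending f ∈ Lip(X) to its extension by 0 at e is an isometric isomorphism of Lip(X) onto Lip_0(Y). -/
open scoped Pointwise

/-- The Lipschitz number of a real-valued function, with respect to an explicitly given
metric `m`. -/
noncomputable def lipNumWith {X : Type*} (m : PseudoMetricSpace X) (f : X → ℝ) : ℝ :=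
  sInf {K : ℝ | 0 ≤ K ∧ ∀ p q : X, |f p - f q| ≤ K * (@dist X m.toDist p q)}

/-- Extension of `f : X → ℝ` to `Y = X ∪ {e}` (`e = none`) by `0` at the base point. -/
def extendZero {X : Type*} (f : X → ℝ) : Option X → ℝ
  | none => 0
  | some p => f p

section aux
variable {X : Type*} [MetricSpace X]

/-- the distance on `Option X`. -/
def optDist : Option X → Option X → ℝ
  | some p, some q => min (dist p q) 2
  | some _, none => 1
  | none, some _ => 1
  | none, none => 0

/-- The metric space structure on `Option X`. -/
noncomputable def optMetric : MetricSpace (Option X) where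
  dist := optDist
  dist_self := by rintro (_|p) <;> simp [optDist]
  dist_comm := by rintro (_|p) (_|q) <;> simp [optDist, dist_comm]
  dist_triangle := by
    have hmin : ∀ a b : X, (0:ℝ) ≤ min (dist a b) 2 := fun a b => le_min dist_nonneg (by norm_num)
    rintro (_|a) (_|b) (_|c) <;> simp only [optDist]
    · norm_num
    · norm_num
    · norm_num
    · linarith [hmin b c]
    · norm_num
    · calc min (dist a c) 2 ≤ 2 := min_le_right _ _
        _ ≤ 1 + 1 := by norm_num
    · linarith [hmin a b]
    · rcases le_total (dist a b) 2 with h1 | h1 <;> rcases le_total (dist b c) 2 with h2 | h2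
      · rw [min_eq_left h1, min_eq_left h2]
        exact le_trans (min_le_left _ _) (dist_triangle a b c)
      · rw [min_eq_right h2]
        have := min_le_right (dist a c) (2:ℝ)
        linarith [hmin a b]
      · rw [min_eq_right h1]
        have := min_le_right (dist a c) (2:ℝ)
        linarith [hmin b c]
      · rw [min_eq_right h1]
        have := min_le_right (dist a c) (2:ℝ)
        linarith [hmin b c]
  eq_of_dist_eq_zero := by
    rintro (_|p) (_|q) h <;> simp only [optDist] at h <;> try norm_num at h
    · rfl
    · have : dist p q = 0 := by
        rcases min_eq_iff.mp h with h' | h'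
        · exact h'.1
        · norm_num at h'
      rw [eq_of_dist_eq_zero this]

end aux

section aux2
variable {X : Type*}

/-- The defining set of `lipNumWith`. -/
def lipSet (m : PseudoMetricSpace X) (f : X → ℝ) : Set ℝ :=
  {K : ℝ | 0 ≤ K ∧ ∀ p q : X, |f p - f q| ≤ K * (@dist X m.toDist p q)}

lemma lipSet_bddBelow (m : PseudoMetricSpace X) (f : X → ℝ) : BddBelow (lipSet m f) :=
  ⟨0, fun _ hK => hK.1⟩

lemma lipNumWith_mem (m : PseudoMetricSpace X) (f : X → ℝ) (hne : (lipSet m f).Nonempty) :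
    lipNumWith m f ∈ lipSet m f := by
  constructor
  · exact le_csInf hne fun K hK => hK.1
  · intro p q
    set d := @dist X m.toDist p q with hd
    have hd0 : 0 ≤ d := @dist_nonneg X m p q
    have key : ∀ K ∈ lipSet m f, |f p - f q| ≤ K * d := fun K hK => hK.2 p q
    have h1 : |f p - f q| ≤ sInf (d • (lipSet m f)) := by
      apply le_csInf (hne.smul_set)
      rintro _ ⟨K, hK, rfl⟩
      show |f p - f q| ≤ d * K
      rw [mul_comm]
      exact key K hK
    rwa [Real.sInf_smul_of_nonneg hd0, smul_eq_mul, mul_comm] at h1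

end aux2

/-- Let `Y = X ∪ {e}` with `ρ_Y(p,q) = min(ρ_X(p,q), 2)` for `p, q ∈ X`
and `ρ_Y(p,e) = 1`.  Then `ρ_Y` is a metric on `Y`, and extension by `0` at `e` is an
isometric isomorphism of `Lip(X)` (norm `max(L f, ‖f‖_∞)`) onto `Lip_0(Y)` (norm `L`). -/
theorem stmt3 {X : Type*} [MetricSpace X] :
    ∃ mY : MetricSpace (Option X),
      (∀ p q : X, @dist _ mY.toDist (some p) (some q) = min (dist p q) 2) ∧
      (∀ p : X, @dist _ mY.toDist (some p) none = 1) ∧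
      (∀ f : X → ℝ, ((∃ K : NNReal, LipschitzWith K f) ∧ (∃ C, ∀ p, |f p| ≤ C)) →
        lipNumWith mY.toPseudoMetricSpace (extendZero f) =
          max (lipNumWith (inferInstance : PseudoMetricSpace X) f) (⨆ p, |f p|)) ∧
      Set.BijOn (fun f : X → ℝ => extendZero f)
        {f : X → ℝ | (∃ K : NNReal, LipschitzWith K f) ∧ (∃ C, ∀ p, |f p| ≤ C)}
        {F : Option X → ℝ |
          (∃ K : NNReal, @LipschitzWith _ _ (@EMetricSpace.toPseudoEMetricSpace _
              (@MetricSpace.toEMetricSpace _ mY)) _ K F) ∧ F none = 0} := by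
  refine ⟨optMetric, fun p q => rfl, fun p => rfl, ?_, ?_⟩
  · -- the lipschitz number computation
    intro f ⟨⟨K0, hK0⟩, ⟨C0, hC0⟩⟩
    set mX : PseudoMetricSpace X := inferInstance
    set A := lipNumWith mX f with hA
    set B := (⨆ p, |f p| : ℝ) with hB
    have hbdd : BddAbove (Set.range fun p => |f p|) := ⟨C0, by rintro _ ⟨p, rfl⟩; exact hC0 p⟩
    have hXmem : ((K0 : ℝ)) ∈ lipSet mX f := by
      refine ⟨K0.coe_nonneg, fun p q => ?_⟩
      have := hK0.dist_le_mul p q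
      rwa [Real.dist_eq] at this
    have hXne : (lipSet mX f).Nonempty := ⟨K0, hXmem⟩
    have hAmem : A ∈ lipSet mX f := lipNumWith_mem mX f hXne
    have hA0 : 0 ≤ A := hAmem.1
    have hB0 : 0 ≤ B := by
      rcases isEmpty_or_nonempty X with h | h
      · rw [hB, Real.iSup_of_isEmpty]
      · obtain ⟨p⟩ := h
        exact le_trans (abs_nonneg (f p)) (le_ciSup hbdd p)
    have hfB : ∀ p : X, |f p| ≤ B := fun p => le_ciSup hbdd p
    set mY : PseudoMetricSpace (Option X) := (optMetric : MetricSpace (Option X)).toPseudoMetricSpace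
    -- characterize membership in the Y-lipSet
    have hYmem : max A B ∈ lipSet mY (extendZero f) := by
      refine ⟨le_trans hA0 (le_max_left _ _), ?_⟩
      rintro (_|p) (_|q)
      · show |(0:ℝ) - 0| ≤ max A B * optDist none none
        simp only [optDist, mul_zero, sub_zero, abs_zero, le_refl]
      · show |(0:ℝ) - f q| ≤ max A B * optDist none (some q)
        simp only [optDist, mul_one, zero_sub, abs_neg]
        exact le_trans (hfB q) (le_max_right _ _)
      · show |f p - 0| ≤ max A B * optDist (some p) none
        simp only [optDist, mul_one, sub_zero]
        exact le_trans (hfB p) (le_max_right _ _)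
      · show |f p - f q| ≤ max A B * optDist (some p) (some q)
        simp only [optDist]
        rcases le_total (dist p q) 2 with h | h
        · rw [min_eq_left h]
          calc |f p - f q| ≤ A * dist p q := hAmem.2 p q
            _ ≤ max A B * dist p q := by
                exact mul_le_mul_of_nonneg_right (le_max_left _ _) dist_nonneg
        · rw [min_eq_right h]
          calc |f p - f q| ≤ |f p| + |f q| := abs_sub _ _
            _ ≤ B + B := add_le_add (hfB p) (hfB q)
            _ ≤ max A B * 2 := by rw [mul_two]; exact add_le_add (le_max_right _ _) (le_max_right _ _)
    have hYne : (lipSet mY (extendZero f)).Nonempty := ⟨_, hYmem⟩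
    have hlow : ∀ K ∈ lipSet mY (extendZero f), max A B ≤ K := by
      rintro K ⟨hK1, hK2⟩
      refine max_le ?_ ?_
      · refine csInf_le (lipSet_bddBelow mX f) ⟨hK1, fun p q => ?_⟩
        have := hK2 (some p) (some q)
        calc |f p - f q| ≤ K * optDist (some p) (some q) := this
          _ ≤ K * dist p q := by
              exact mul_le_mul_of_nonneg_left (min_le_left _ _) hK1
      · rcases isEmpty_or_nonempty X with h | h
        · rw [hB, Real.iSup_of_isEmpty]; exact hK1
        · refine ciSup_le fun p => ?_
          have := hK2 (some p) none
          calc |f p| = |f p - 0| := by rw [sub_zero]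
            _ ≤ K * optDist (some p) none := this
            _ = K := mul_one K
    exact le_antisymm (csInf_le (lipSet_bddBelow mY _) hYmem) (le_csInf hYne hlow)
  · -- bijection
    constructor
    · -- MapsTo
      rintro f ⟨⟨K0, hK0⟩, ⟨C0, hC0⟩⟩
      letI : MetricSpace (Option X) := optMetric
      refine ⟨⟨K0 + Real.toNNReal C0, ?_⟩, rfl⟩
      apply LipschitzWith.of_dist_le_mul
      rintro (_|p) (_|q)
      · show dist (0:ℝ) 0 ≤ _; simp
      · show dist (0:ℝ) (f q) ≤ _ * optDist none (some q)
        simp only [optDist, mul_one, Real.dist_eq, zero_sub, abs_neg]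
        calc |f q| ≤ C0 := hC0 q
          _ ≤ Real.toNNReal C0 := (Real.le_coe_toNNReal C0)
          _ ≤ (K0:ℝ) + Real.toNNReal C0 := le_add_of_nonneg_left K0.coe_nonneg
      · show dist (f p) (0:ℝ) ≤ _ * optDist (some p) none
        simp only [optDist, mul_one, Real.dist_eq, sub_zero]
        calc |f p| ≤ C0 := hC0 p
          _ ≤ Real.toNNReal C0 := (Real.le_coe_toNNReal C0)
          _ ≤ (K0:ℝ) + Real.toNNReal C0 := le_add_of_nonneg_left K0.coe_nonneg
      · show dist (f p) (f q) ≤ _ * optDist (some p) (some q)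
        simp only [optDist]
        have hd := hK0.dist_le_mul p q
        rcases le_total (dist p q) 2 with h | h
        · rw [min_eq_left h]
          calc dist (f p) (f q) ≤ K0 * dist p q := hd
            _ ≤ ((K0 + Real.toNNReal C0 : NNReal):ℝ) * dist p q := by
                apply mul_le_mul_of_nonneg_right _ dist_nonneg
                push_cast; exact le_add_of_nonneg_right (Real.toNNReal C0).coe_nonneg
        · rw [min_eq_right h]
          rw [Real.dist_eq]
          calc |f p - f q| ≤ |f p| + |f q| := abs_sub _ _
            _ ≤ C0 + C0 := add_le_add (hC0 p) (hC0 q)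
            _ ≤ ((K0 + Real.toNNReal C0 : NNReal):ℝ) * 2 := by
                push_cast
                have h1 : C0 ≤ (K0:ℝ) + Real.toNNReal C0 := by
                  have := Real.le_coe_toNNReal C0
                  have := K0.coe_nonneg
                  linarith
                linarith
    constructor
    · -- InjOn
      intro f _ g _ h
      funext p
      exact congrFun h (some p)
    · -- SurjOn
      rintro F ⟨⟨K0, hK0⟩, hF0⟩
      letI : MetricSpace (Option X) := optMetric
      refine ⟨fun p => F (some p), ⟨⟨K0, ?_⟩, ⟨(K0:ℝ), fun p => ?_⟩⟩, ?_⟩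
      · apply LipschitzWith.of_dist_le_mul
        intro p q
        have h := hK0.dist_le_mul (some p) (some q)
        calc dist (F (some p)) (F (some q)) ≤ K0 * optDist (some p) (some q) := h
          _ ≤ K0 * dist p q := mul_le_mul_of_nonneg_left (min_le_left _ _) K0.coe_nonneg
      · have h := hK0.dist_le_mul (some p) none
        rw [hF0, Real.dist_eq, sub_zero] at h
        calc |F (some p)| ≤ K0 * optDist (some p) none := h
          _ = K0 := mul_one _
      · funext a
        cases a with
        | none => exact hF0.symm
        | some p => rfl
end

section
/- If the distance from p to q in a metric space X exceeds 2, then truncating the metric at 2 (replacing ρ by min(ρ,2)) does not change the norm ‖f‖_L = max(L(f), ‖f‖_∞) on bounded Lipschitz functions: for every bounded function f, the Lipschitz-max-sup norm with respect to ρ equals that with respect to min(ρ,2). -/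
/-!
Truncation only shrinks distances, so it can only increase the Lipschitz number. Conversely,
a pair at truncated distance `c ≥ 2` has slope `|f p - f q| / c ≤ (|f p| + |f q|) / 2 ≤ ‖f‖_∞`,
so the new slopes are dominated by the sup norm, which is the other term of the maximum.
-/

open ENNReal

/-- The (extended-real-valued) Lipschitz number of `f` with respect to an explicitly
given metric `m` on `X`. -/
noncomputable def elipNum {X : Type*} (m : PseudoMetricSpace X) (f : X → ℝ) : ℝ≥0∞ :=
  ⨆ p : X, ⨆ q : X, edist (f p) (f q) / (@edist X m.toEDist p q)

/-- The Lipschitz-max-sup norm `max(L f, ‖f‖_∞)` with respect to a metric `m`. -/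
noncomputable def lipMaxSupNorm {X : Type*} (m : PseudoMetricSpace X) (f : X → ℝ) : ℝ≥0∞ :=
  max (elipNum m f) (⨆ p : X, ‖f p‖₊)

section

variable {X : Type*}

lemma min_dist_triangle [PseudoMetricSpace X] {c : ℝ} (hc : 0 ≤ c) (x y z : X) :
    min (dist x z) c ≤ min (dist x y) c + min (dist y z) c := by
  rcases min_cases (dist x y) c with h | h <;> rcases min_cases (dist y z) c with h' | h' <;>
  · rw [h.1, h'.1]
    linarith [dist_triangle x y z, dist_nonneg (x := x) (y := y), dist_nonneg (x := y) (y := z),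
      min_le_left (dist x z) c, min_le_right (dist x z) c]

@[reducible] noncomputable def truncatedMetric [MetricSpace X] (c : ℝ) (hc : 0 < c) :
    MetricSpace X where
  dist p q := min (dist p q) c
  dist_self x := by simp [hc.le]
  dist_comm x y := by simp [dist_comm]
  dist_triangle := min_dist_triangle hc.le
  eq_of_dist_eq_zero h := dist_eq_zero.1 ((min_eq_iff.1 h).resolve_right fun h' => hc.ne' h'.1).1

lemma truncatedMetric_dist [MetricSpace X] {c : ℝ} (hc : 0 < c) (p q : X) :
    @dist X (truncatedMetric c hc).toDist p q = min (dist p q) c :=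
  rfl

lemma truncatedMetric_edist [MetricSpace X] {c : ℝ} (hc : 0 < c) (p q : X) :
    @edist X (truncatedMetric c hc).toEDist p q = min (edist p q) (ENNReal.ofReal c) := by
  rw [@edist_dist X (truncatedMetric c hc).toPseudoMetricSpace, truncatedMetric_dist, edist_dist]
  exact ENNReal.ofReal_min _ _

lemma edist_le_two_mul_iSup_nnnorm {E : Type*} [SeminormedAddCommGroup E] (f : X → E)
    (p q : X) : edist (f p) (f q) ≤ 2 * ⨆ x, (‖f x‖₊ : ℝ≥0∞) := by
  have hle : ∀ x, ‖f x‖ₑ ≤ ⨆ x, (‖f x‖₊ : ℝ≥0∞) := le_iSup (fun x => (‖f x‖₊ : ℝ≥0∞))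
  calc edist (f p) (f q) ≤ ‖f p‖ₑ + ‖f q‖ₑ := by rw [edist_eq_enorm_sub]; exact enorm_sub_le
    _ ≤ 2 * ⨆ x, (‖f x‖₊ : ℝ≥0∞) := by rw [two_mul]; exact add_le_add (hle p) (hle q)

lemma elipNum_le_of_edist_le {m m' : PseudoMetricSpace X}
    (h : ∀ p q, @edist X m'.toEDist p q ≤ @edist X m.toEDist p q) (f : X → ℝ) :
    elipNum m f ≤ elipNum m' f :=
  iSup₂_mono fun p q => ENNReal.div_le_div_left (h p q) _

lemma elipNum_truncatedMetric_le [MetricSpace X] {c : ℝ} (hc : 0 < c) (h2c : 2 ≤ c) (f : X → ℝ) :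
    elipNum (truncatedMetric c hc).toPseudoMetricSpace f ≤
      max (elipNum inferInstance f) (⨆ p, (‖f p‖₊ : ℝ≥0∞)) := by
  refine iSup₂_le fun p q => ?_
  rw [truncatedMetric_edist]
  rcases le_total (edist p q) (ENNReal.ofReal c) with h | h
  · rw [min_eq_left h]
    exact le_max_of_le_left (le_iSup₂ (f := fun p q => edist (f p) (f q) / edist p q) p q)
  · rw [min_eq_right h]
    refine le_max_of_le_right (ENNReal.div_le_of_le_mul ?_)
    calc edist (f p) (f q) ≤ 2 * ⨆ x, (‖f x‖₊ : ℝ≥0∞) := edist_le_two_mul_iSup_nnnorm f p q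
      _ ≤ (⨆ x, (‖f x‖₊ : ℝ≥0∞)) * ENNReal.ofReal c := by
        rw [mul_comm]
        gcongr
        exact ENNReal.ofNat_le_ofReal.2 h2c

theorem lipMaxSupNorm_truncatedMetric [MetricSpace X] {c : ℝ} (hc : 0 < c) (h2c : 2 ≤ c)
    (f : X → ℝ) :
    lipMaxSupNorm (truncatedMetric c hc).toPseudoMetricSpace f = lipMaxSupNorm inferInstance f :=
  le_antisymm (max_le (elipNum_truncatedMetric_le hc h2c f) (le_max_right _ _))
    (max_le_max_right _ <| elipNum_le_of_edist_le
      (fun p q => (truncatedMetric_edist hc p q).trans_le (min_le_left _ _)) f)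

end

/-- truncating the metric at `2` (replacing `ρ` by `min (ρ, 2)`, still a
metric) does not change the norm `‖f‖_L = max(L f, ‖f‖_∞)` of any bounded function:
slopes over distances exceeding `2` are dominated by the sup norm. -/
theorem stmt5 {X : Type*} [m : MetricSpace X] :
    ∃ m' : MetricSpace X,
      (∀ p q : X, @dist X m'.toDist p q = min (dist p q) 2) ∧
      ∀ f : X → ℝ, (∃ C, ∀ p, |f p| ≤ C) →
        lipMaxSupNorm m.toPseudoMetricSpace f = lipMaxSupNorm m'.toPseudoMetricSpace f :=
  ⟨truncatedMetric 2 two_pos,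
    fun p q => (min_eq_left <| (truncatedMetric_dist two_pos p q).trans_le (min_le_right _ _)).symm,
    fun f _ => (lipMaxSupNorm_truncatedMetric two_pos le_rfl f).symm⟩
end

section
/- Let X be a complete convex metric space. Then for any distinct p, q ∈ X with a = ρ(p,q) there is an isometric embedding of the interval [0,a] ⊂ ℝ into X taking 0 to p and a to q. -/
/-- in a complete convex metric space, any two distinct points `p, q` with
`a = dist p q` are joined by an isometric embedding of `[0, a]` sending `0 ↦ p`, `a ↦ q`. -/
theorem stmt16 {X : Type*} [MetricSpace X] [CompleteSpace X]
    (hconv : ∀ p q : X, p ≠ q → ∃ r : X, r ≠ p ∧ r ≠ q ∧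
      dist p q = dist p r + dist r q)
    (p q : X) (hpq : p ≠ q) (a : ℝ) (ha : a = dist p q) :
    ∃ γ : ℝ → X, γ 0 = p ∧ γ a = q ∧
      ∀ s ∈ Set.Icc (0:ℝ) a, ∀ t ∈ Set.Icc (0:ℝ) a, dist (γ s) (γ t) = |s - t| := by
  classical
  have hd : 0 < a := by rw [ha]; exact dist_pos.mpr hpq
  -- the collection of "partial geodesic graphs"
  set S : Set (Set (ℝ × X)) := {G | (0, p) ∈ G ∧ (a, q) ∈ G ∧
    (∀ z ∈ G, z.1 ∈ Set.Icc (0:ℝ) a) ∧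
    (∀ z ∈ G, ∀ w ∈ G, dist z.2 w.2 = |z.1 - w.1|)} with hSdef
  have hbase : ({(0, p), (a, q)} : Set (ℝ × X)) ∈ S := by
    refine ⟨Or.inl rfl, Or.inr rfl, ?_, ?_⟩
    · rintro z (rfl | rfl)
      · exact ⟨le_refl _, hd.le⟩
      · exact ⟨hd.le, le_refl _⟩
    · rintro z (rfl | rfl) w (rfl | rfl)
      · simp
      · simp only [ha]
        rw [abs_of_nonpos (by simp [← ha, hd.le])]
        ring
      · simp only [dist_comm q p, ha]
        rw [abs_of_nonneg (by simp [← ha, hd.le])]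
        ring
      · simp
  obtain ⟨G, -, hGS, hGmax⟩ := zorn_subset_nonempty S (fun c hcS hchain hcne => by
      obtain ⟨G0, hG0⟩ := hcne
      refine ⟨⋃₀ c, ⟨?_, ?_, ?_, ?_⟩, fun s hs => Set.subset_sUnion_of_mem hs⟩
      · exact ⟨G0, hG0, (hcS hG0).1⟩
      · exact ⟨G0, hG0, (hcS hG0).2.1⟩
      · rintro z ⟨t, htc, hzt⟩
        exact (hcS htc).2.2.1 z hzt
      · rintro z ⟨t, htc, hzt⟩ w ⟨u, huc, hwu⟩
        rcases hchain.total htc huc with h | h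
        · exact (hcS huc).2.2.2 z (h hzt) w hwu
        · exact (hcS htc).2.2.2 z hzt w (h hwu)) _ hbase
  obtain ⟨h0G, haG, hdom, hiso⟩ := hGS
  -- extension lemma from maximality
  have hext : ∀ u : ℝ, u ∈ Set.Icc (0:ℝ) a → ∀ r : X,
      (∀ z ∈ G, dist r z.2 = |u - z.1|) → (u, r) ∈ G := by
    intro u hu r hr
    have hmem : insert (u, r) G ∈ S := by
      refine ⟨Set.mem_insert_of_mem _ h0G, Set.mem_insert_of_mem _ haG, ?_, ?_⟩
      · rintro z (rfl | hz)
        · exact hu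
        · exact hdom z hz
      · rintro z (rfl | hz) w (rfl | hw)
        · simp
        · exact hr w hw
        · rw [dist_comm, hr z hz, abs_sub_comm]
        · exact hiso z hz w hw
    exact hGmax hmem (Set.subset_insert _ _) (Set.mem_insert _ _)
  -- the domain of G
  set D : Set ℝ := {t | ∃ x, (t, x) ∈ G} with hDdef
  have hDsub : D ⊆ Set.Icc (0:ℝ) a := by
    rintro t ⟨x, hx⟩; exact hdom (t, x) hx
  -- D is closed
  have hDclosed : IsClosed D := by
    refine isClosed_of_closure_subset ?_
    intro s hs
    obtain ⟨u, huD, hulim⟩ := mem_closure_iff_seq_limit.mp hs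
    choose f hf using huD
    have hcauchy : CauchySeq f := by
      rw [Metric.cauchySeq_iff]
      have := (hulim.cauchySeq)
      rw [Metric.cauchySeq_iff] at this
      intro ε hε
      obtain ⟨N, hN⟩ := this ε hε
      refine ⟨N, fun m hm n hn => ?_⟩
      have := hiso (u m, f m) (hf m) (u n, f n) (hf n)
      simp only at this
      rw [this, ← Real.dist_eq]
      exact hN m hm n hn
    obtain ⟨x, hx⟩ := cauchySeq_tendsto_of_complete hcauchy
    have hsIcc : s ∈ Set.Icc (0:ℝ) a :=
      isClosed_Icc.mem_of_tendsto hulim (Filter.Eventually.of_forall fun n => hDsub ⟨f n, hf n⟩)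
    refine ⟨x, hext s hsIcc x ?_⟩
    intro z hz
    have h1 : Filter.Tendsto (fun n => dist (f n) z.2) Filter.atTop (nhds (dist x z.2)) :=
      hx.dist tendsto_const_nhds
    have h2 : Filter.Tendsto (fun n => dist (f n) z.2) Filter.atTop (nhds |s - z.1|) := by
      have : Filter.Tendsto (fun n => |u n - z.1|) Filter.atTop (nhds |s - z.1|) :=
        ((hulim.sub_const z.1).abs)
      convert this using 2 with n
      exact hiso (u n, f n) (hf n) z hz
    exact tendsto_nhds_unique h1 h2
  have h0D : (0:ℝ) ∈ D := ⟨p, h0G⟩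
  have haD : a ∈ D := ⟨q, haG⟩
  -- D is all of [0, a]
  have hfull : ∀ t ∈ Set.Icc (0:ℝ) a, t ∈ D := by
    by_contra hcon
    push_neg at hcon
    obtain ⟨t, htIcc, htD⟩ := hcon
    set A := D ∩ Set.Iic t with hA
    set B := D ∩ Set.Ici t with hB
    have hAne : A.Nonempty := ⟨0, h0D, htIcc.1⟩
    have hBne : B.Nonempty := ⟨a, haD, htIcc.2⟩
    have hAbdd : BddAbove A := ⟨t, fun x hx => hx.2⟩
    have hBbdd : BddBelow B := ⟨t, fun x hx => hx.2⟩
    set s₁ := sSup A with hs₁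
    set s₂ := sInf B with hs₂
    have hs₁A : s₁ ∈ A := (hDclosed.inter isClosed_Iic).csSup_mem hAne hAbdd
    have hs₂B : s₂ ∈ B := (hDclosed.inter isClosed_Ici).csInf_mem hBne hBbdd
    have hs₁t : s₁ < t := lt_of_le_of_ne hs₁A.2 (fun h => htD (h ▸ hs₁A.1))
    have hts₂ : t < s₂ := lt_of_le_of_ne hs₂B.2 (fun h => htD (by rw [h]; exact hs₂B.1))
    have hgap : ∀ v ∈ D, v ≤ s₁ ∨ s₂ ≤ v := by
      intro v hv
      rcases le_total v t with h | h
      · exact Or.inl (le_csSup hAbdd ⟨hv, h⟩)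
      · exact Or.inr (csInf_le hBbdd ⟨hv, h⟩)
    obtain ⟨x₁, hx₁⟩ := hs₁A.1
    obtain ⟨x₂, hx₂⟩ := hs₂B.1
    have hdist12 : dist x₁ x₂ = s₂ - s₁ := by
      have := hiso (s₁, x₁) hx₁ (s₂, x₂) hx₂
      simp only at this
      rw [this, abs_of_nonpos (by linarith)]
      ring
    have hne12 : x₁ ≠ x₂ := by
      intro h
      rw [h, dist_self] at hdist12
      linarith
    obtain ⟨r, hr1, hr2, hrd⟩ := hconv x₁ x₂ hne12
    have hc1 : 0 < dist x₁ r := dist_pos.mpr (Ne.symm hr1)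
    have hc2 : 0 < dist r x₂ := dist_pos.mpr hr2
    set u := s₁ + dist x₁ r with hu
    have hus₂ : u < s₂ := by rw [hu]; nlinarith [hdist12, hrd]
    have huIcc : u ∈ Set.Icc (0:ℝ) a := by
      constructor
      · have := hs₁A.1
        have := (hDsub this).1
        linarith
      · have := (hDsub hs₂B.1).2
        linarith
    have huD : u ∉ D := by
      intro huD
      rcases hgap u huD with h | h
      · linarith
      · linarith
    apply huD
    refine ⟨r, hext u huIcc r ?_⟩
    rintro ⟨t', y⟩ hzy
    show dist r y = |u - t'|
    have hs₁u : s₁ ≤ u := by rw [hu]; linarith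
    rcases hgap t' ⟨y, hzy⟩ with h | h
    · -- t' ≤ s₁
      have hy1 : dist x₁ y = s₁ - t' := by
        have := hiso (s₁, x₁) hx₁ (t', y) hzy
        simp only at this
        rw [this, abs_of_nonneg (by linarith)]
      have hy2 : dist x₂ y = s₂ - t' := by
        have := hiso (s₂, x₂) hx₂ (t', y) hzy
        simp only at this
        rw [this, abs_of_nonneg (by linarith)]
      have ht1 : dist r y ≤ dist r x₁ + dist x₁ y := dist_triangle _ _ _
      have ht2 : dist x₂ y ≤ dist x₂ r + dist r y := dist_triangle _ _ _
      rw [dist_comm r x₁] at ht1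
      rw [dist_comm x₂ r] at ht2
      have : dist r y = u - t' := by
        rw [hu]
        linarith [hrd, hdist12, ht1, ht2, hy1, hy2]
      rw [this, abs_of_nonneg (by linarith)]
    · -- s₂ ≤ t'
      have hy1 : dist x₁ y = t' - s₁ := by
        have := hiso (s₁, x₁) hx₁ (t', y) hzy
        simp only at this
        rw [this, abs_of_nonpos (by linarith)]
        ring
      have hy2 : dist x₂ y = t' - s₂ := by
        have := hiso (s₂, x₂) hx₂ (t', y) hzy
        simp only at this
        rw [this, abs_of_nonpos (by linarith)]
        ring
      have ht1 : dist r y ≤ dist r x₂ + dist x₂ y := dist_triangle _ _ _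
      have ht2 : dist x₁ y ≤ dist x₁ r + dist r y := dist_triangle _ _ _
      have : dist r y = t' - u := by
        rw [hu]
        linarith [hrd, hdist12, ht1, ht2, hy1, hy2]
      rw [this, abs_of_nonpos (by linarith)]
      ring
  -- define the geodesic
  set γ : ℝ → X := fun t => if h : ∃ x, (t, x) ∈ G then h.choose else p with hγ
  have hγmem : ∀ t : ℝ, ∀ h : ∃ x, (t, x) ∈ G, γ t = h.choose := by
    intro t h
    simp only [hγ, dif_pos h]
  have hγG : ∀ t ∈ Set.Icc (0:ℝ) a, (t, γ t) ∈ G := by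
    intro t ht
    have h := hfull t ht
    rw [hγmem t h]
    exact h.choose_spec
  refine ⟨γ, ?_, ?_, ?_⟩
  · have h0 := hγG 0 ⟨le_refl _, hd.le⟩
    have := hiso (0, γ 0) h0 (0, p) h0G
    simp only [sub_self, abs_zero] at this
    exact dist_eq_zero.mp this
  · have h1 := hγG a ⟨hd.le, le_refl _⟩
    have := hiso (a, γ a) h1 (a, q) haG
    simp only [sub_self, abs_zero] at this
    exact dist_eq_zero.mp this
  · intro s hs t ht
    exact hiso (s, γ s) (hγG s hs) (t, γ t) (hγG t ht)
end

section
/- Let X be a complete convex pointed metric space, n ∈ ℕ, X_n the closed ball of radius n about the base point e, and h(p) = min(ρ(p,e), n). Then for f ∈ Lip_0(X) with L(f) ≤ 1: f vanishes on X_n if and only if L(f + h) ≤ 1 and L(f − h) ≤ 1. -/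
/-!
Off `X_n` the function `h` is constant, and on `X_n` the function `f` vanishes, so `f ± h` is
`1`-Lipschitz once `|f p| ≤ ρ(p, e) - n` for `p ∉ X_n`. That bound follows from `L(f) ≤ 1` and a
point `r` with `ρ(e, r) = n` and `ρ(r, p) = ρ(p, e) - n`. Such a point exists by Menger's argument:
by Caristi's principle, among the pairs `(a, b)` lying in this order on a metric segment from `e`
to `p` with `ρ(e, a) ≤ n ≤ ρ(e, b)`, some pair cannot be shortened by half the distance it is
moved, whereas replacing an endpoint by a point strictly between `a ≠ b` shortens it by the full
distance moved; hence `a = b = r`. Conversely, comparing `f ± h` at `p ∈ X_n`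
and at `e` gives `f p ≤ 0` and `f p ≥ 0`.
-/

open Set Filter

section Caristi

variable {Y : Type*} [MetricSpace Y]

def caristiSet (φ : Y → ℝ) (x : Y) : Set Y := {y | φ y + dist x y ≤ φ x}

theorem self_mem_caristiSet (φ : Y → ℝ) (x : Y) : x ∈ caristiSet φ x := by
  simp [caristiSet]

theorem caristiSet_subset {φ : Y → ℝ} {x y : Y} (hy : y ∈ caristiSet φ x) :
    caristiSet φ y ⊆ caristiSet φ x := fun z hz => by
  simp only [caristiSet, mem_ofPred_eq] at hy hz ⊢
  linarith [dist_triangle x y z]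

theorem LowerSemicontinuous.isClosed_caristiSet {φ : Y → ℝ} (hφ : LowerSemicontinuous φ)
    (x : Y) : IsClosed (caristiSet φ x) :=
  (hφ.add (continuous_const.dist continuous_id).lowerSemicontinuous).isClosed_preimage (φ x)

theorem LowerSemicontinuous.exists_forall_add_dist_le_imp_eq [CompleteSpace Y] [Nonempty Y]
    {φ : Y → ℝ} (hφ : LowerSemicontinuous φ) (hbdd : BddBelow (range φ)) :
    ∃ x, ∀ y, φ y + dist x y ≤ φ x → y = x := by
  set R := caristiSet φ
  have almost_min : ∀ (x : Y) (k : ℕ), ∃ y ∈ R x, ∀ z ∈ R x, φ y ≤ φ z + (1 / 2) ^ k := by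
    intro x k
    obtain ⟨_, ⟨y, hy, rfl⟩, hlt⟩ := Real.lt_sInf_add_pos (s := φ '' R x)
      ⟨φ x, x, self_mem_caristiSet φ x, rfl⟩ (by positivity : (0 : ℝ) < (1 / 2) ^ k)
    refine ⟨y, hy, fun z hz => hlt.le.trans ?_⟩
    gcongr
    exact csInf_le (hbdd.mono (image_subset_range _ _)) ⟨z, hz, rfl⟩
  choose next next_mem next_min using almost_min
  let u : ℕ → Y := fun k => Nat.rec (Classical.arbitrary Y) (fun k x => next x k) k
  have R_u_anti : Antitone (R ∘ u) :=
    antitone_nat_of_succ_le fun k => caristiSet_subset (next_mem (u k) k)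
  have dist_le : ∀ k, ∀ y ∈ R (u (k + 1)), dist (u (k + 1)) y ≤ (1 / 2) ^ k := by
    intro k y hy
    have := next_min (u k) k y (R_u_anti k.le_succ hy)
    simp only [R, caristiSet, mem_ofPred_eq] at hy
    linarith
  have small : ∀ ε > 0, ∃ k : ℕ, (1 / 2 : ℝ) ^ k < ε := fun ε hε =>
    exists_pow_lt_of_lt_one hε (by norm_num)
  have u_cauchy : CauchySeq u := by
    refine Metric.cauchySeq_iff'.2 fun ε hε => ?_
    obtain ⟨k, hk⟩ := small ε hε
    refine ⟨k + 1, fun j hj => ?_⟩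
    rw [dist_comm]
    exact (dist_le k _ (R_u_anti hj (self_mem_caristiSet φ _))).trans_lt hk
  obtain ⟨x, hx⟩ := cauchySeq_tendsto_of_complete u_cauchy
  have x_mem : ∀ k, x ∈ R (u k) := fun k => (hφ.isClosed_caristiSet _).mem_of_tendsto hx
    (eventually_atTop.2 ⟨k, fun j hj => R_u_anti hj (self_mem_caristiSet φ _)⟩)
  refine ⟨x, fun y hy => eq_of_forall_dist_le fun ε hε => ?_⟩
  obtain ⟨k, hk⟩ := small (ε / 2) (half_pos hε)
  have hy' : y ∈ R (u (k + 1)) := caristiSet_subset (x_mem (k + 1)) hy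
  calc dist y x ≤ dist (u (k + 1)) y + dist (u (k + 1)) x := dist_triangle_left _ _ _
    _ ≤ ε := by linarith [dist_le k y hy', dist_le k x (x_mem (k + 1))]

end Caristi

theorem exists_dist_eq_of_menger_convex {X : Type*} [MetricSpace X] [CompleteSpace X]
    (hconv : ∀ p q : X, p ≠ q → ∃ r : X, r ≠ p ∧ r ≠ q ∧ dist p q = dist p r + dist r q)
    (e q : X) {t : ℝ} (ht₀ : 0 ≤ t) (ht : t ≤ dist e q) :
    ∃ r, dist e r = t ∧ dist r q = dist e q - t := by
  set S : Set (X × X) := {p | dist e p.1 ≤ t ∧ t ≤ dist e p.2 ∧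
    dist e p.1 + dist p.1 p.2 + dist p.2 q = dist e q}
  have hS : IsClosed S := by
    simp only [S, ofPred_and]
    exact (isClosed_le (by fun_prop) (by fun_prop)).inter <|
      (isClosed_le (by fun_prop) (by fun_prop)).inter (isClosed_eq (by fun_prop) (by fun_prop))
  have := hS.isComplete.completeSpace_coe
  have : Nonempty S := ⟨⟨(e, q), by simpa [S] using ⟨ht₀, ht⟩⟩⟩
  -- the weight `2`: replacing `a` by `c` lowers `2 * ρ(a, b)` by twice the displacement `ρ(a, c)`
  have hφ : Continuous fun p : S => 2 * dist p.1.1 p.1.2 := by fun_prop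
  obtain ⟨⟨⟨a, b⟩, ha, hb, hab⟩, hmin⟩ := hφ.lowerSemicontinuous.exists_forall_add_dist_le_imp_eq
    ⟨0, by rintro _ ⟨p, rfl⟩; positivity⟩
  dsimp only at ha hb hab
  simp only [Subtype.forall, Subtype.mk.injEq, Subtype.dist_eq, Prod.dist_eq, Prod.forall,
    Prod.mk.injEq] at hmin
  suffices a = b by
    subst this
    exact ⟨a, le_antisymm ha hb, by simp at hab; linarith [le_antisymm ha hb]⟩
  by_contra hne
  obtain ⟨c, hca, hcb, hc⟩ := hconv a b hne
  rcases le_or_gt (dist e c) t with hct | hct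
  · refine hca (hmin c b ⟨hct, hb, ?_⟩ ?_).1
    · linarith [dist_triangle e a c, dist_triangle e c q, dist_triangle c b q]
    · simp only [dist_self, max_eq_left dist_nonneg]
      linarith [dist_nonneg (x := a) (y := c)]
  · refine hcb (hmin a c ⟨ha, hct.le, ?_⟩ ?_).2
    · dsimp only
      linarith [dist_triangle e a c, dist_triangle e c q, dist_triangle c b q]
    · simp only [dist_self, max_eq_right dist_nonneg, dist_comm b c]
      linarith [dist_nonneg (x := c) (y := b)]

section LipschitzZeroOnBall

variable {X : Type*} [MetricSpace X] {e : X} {n : ℝ} {f : X → ℝ}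

theorem abs_le_dist_sub_of_forall_dist_le_eq_zero [CompleteSpace X]
    (hconv : ∀ p q : X, p ≠ q → ∃ r : X, r ≠ p ∧ r ≠ q ∧ dist p q = dist p r + dist r q)
    (hf : LipschitzWith 1 f) (hn : 0 ≤ n) (hzero : ∀ p, dist p e ≤ n → f p = 0) {p : X}
    (hp : n ≤ dist p e) : |f p| ≤ dist p e - n := by
  obtain ⟨r, her, hrp⟩ :=
    exists_dist_eq_of_menger_convex hconv e p hn (by rwa [dist_comm])
  have hfr : f r = 0 := hzero r (by rw [dist_comm, her])
  calc |f p| = dist (f p) (f r) := by rw [Real.dist_eq, hfr, sub_zero]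
    _ ≤ dist p r := by simpa using hf.dist_le_mul p r
    _ = dist p e - n := by rw [dist_comm, hrp, dist_comm]

theorem lipschitzWith_one_add_mul_min_dist (hf : LipschitzWith 1 f)
    (hzero : ∀ p, dist p e ≤ n → f p = 0) (hout : ∀ p, n ≤ dist p e → |f p| ≤ dist p e - n)
    {s : ℝ} (hs : |s| ≤ 1) : LipschitzWith 1 fun p => f p + s * min (dist p e) n := by
  set g := fun p => f p + s * min (dist p e) n
  suffices h : ∀ p q, dist p e ≤ dist q e → |g p - g q| ≤ dist p q by
    refine LipschitzWith.of_dist_le_mul fun p q => ?_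
    rw [NNReal.coe_one, one_mul, Real.dist_eq]
    rcases le_total (dist p e) (dist q e) with hpq | hqp
    · exact h p q hpq
    · rw [abs_sub_comm, dist_comm]
      exact h q p hqp
  intro p q hpq
  rcases le_or_gt (dist q e) n with hq | hq
  · have hp := hpq.trans hq
    calc |g p - g q| = |s| * |dist p e - dist q e| := by
          simp only [g, hzero p hp, hzero q hq, min_eq_left hp, min_eq_left hq, ← abs_mul]
          ring_nf
      _ ≤ 1 * dist p q := by gcongr; exact abs_dist_sub_le p q e
      _ = dist p q := one_mul _
  rcases le_or_gt (dist p e) n with hp | hp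
  · calc |g p - g q| = |s * (dist p e - n) - f q| := by
          simp only [g, hzero p hp, min_eq_left hp, min_eq_right hq.le]
          ring_nf
      _ ≤ |s| * |dist p e - n| + |f q| := by rw [← abs_mul]; exact abs_sub _ _
      _ ≤ 1 * (n - dist p e) + (dist q e - n) := by
          gcongr
          · rw [abs_of_nonpos (by linarith)]; linarith
          · exact hout q hq.le
      _ ≤ dist p q := by linarith [dist_triangle q p e, dist_comm p q]
  · calc |g p - g q| = dist (f p) (f q) := by
          simp only [g, min_eq_right hp.le, min_eq_right hq.le, Real.dist_eq]
          ring_nf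
      _ ≤ dist p q := by simpa using hf.dist_le_mul p q

theorem eq_zero_of_lipschitzWith_add_of_lipschitzWith_sub {g : X → ℝ} {p : X} (hfe : f e = 0)
    (hge : g e = 0) (hgp : g p = dist p e) (hadd : LipschitzWith 1 fun x => f x + g x)
    (hsub : LipschitzWith 1 fun x => f x - g x) : f p = 0 := by
  have h₁ := hadd.dist_le_mul p e
  have h₂ := hsub.dist_le_mul p e
  simp only [Real.dist_eq, NNReal.coe_one, one_mul, hfe, hge, hgp, add_zero, sub_zero] at h₁ h₂
  linarith [(abs_le.1 h₁).2, (abs_le.1 h₂).1]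

end LipschitzZeroOnBall

/-- with `X` complete and convex with base point `e`, `X_n` the closed ball
of radius `n` about `e`, `h p = min (dist p e) n`, and `f ∈ Lip_0(X)` with `L(f) ≤ 1`:
`f` vanishes on `X_n` iff `L(f + h) ≤ 1` and `L(f - h) ≤ 1`. -/
theorem stmt17 {X : Type*} [MetricSpace X] [CompleteSpace X] (e : X)
    (hconv : ∀ p q : X, p ≠ q → ∃ r : X, r ≠ p ∧ r ≠ q ∧
      dist p q = dist p r + dist r q)
    (n : ℕ) (f : X → ℝ) (hf : LipschitzWith 1 f) (hfe : f e = 0) :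
    (∀ p : X, dist p e ≤ n → f p = 0) ↔
      (LipschitzWith 1 (fun p => f p + min (dist p e) n) ∧
       LipschitzWith 1 (fun p => f p - min (dist p e) n)) := by
  have hn : (0 : ℝ) ≤ n := n.cast_nonneg
  refine ⟨fun hzero => ?_, fun ⟨hadd, hsub⟩ p hp => ?_⟩
  · have hout := fun p => abs_le_dist_sub_of_forall_dist_le_eq_zero hconv hf hn hzero (p := p)
    constructor
    · simpa using lipschitzWith_one_add_mul_min_dist hf hzero hout (s := 1) (by simp)
    · simpa [sub_eq_add_neg] using
        lipschitzWith_one_add_mul_min_dist hf hzero hout (s := -1) (by simp)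
  · exact eq_zero_of_lipschitzWith_add_of_lipschitzWith_sub hfe (by simp [hn]) (min_eq_left hp)
      hadd hsub
end
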